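/- arXiv:1311.3229 — 2 statements merged into one kernel-verified Lean document; each statement's English description precedes it below -/
import Mathlib

section
/- Let C₁ > 0 and C₂ > 0 and let ψ(u) := C₂√(u(C₁−u)) / (π(C₂² + u(C₁−u))). Then ∫₀^{C₁} ψ(u)/u du = C₁/√(C₁² + 4C₂²). -/
/-!
Substituting `t = √((C₁ - u) / u)`, i.e. `u = C₁ / (1 + t²)`, turns `ψ(u) du / u` into
`-(2 C₁ / (π C₂)) t² dt / ((t² + a²)(t² + b²))`, where `a, -b` are the roots of `C₂ z² - C₁ z - C₂`
(so `a b = 1`, `C₂ (a - b) = C₁` and `C₂ (a + b) = √(C₁² + 4 C₂²)`). Since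
`a arctan (t / a) - b arctan (t / b)` is a primitive of `(a² - b²) t² / ((t² + a²)(t² + b²))`,
the integral equals `(a - b) / (a + b) = C₁ / √(C₁² + 4 C₂²)`. The integrand is nonnegative, so
its integrability comes for free from the existence of the one-sided limits of the primitive.
-/

/-- The density ψ of the absolutely continuous part of the JKD representing measure. -/
noncomputable def psi (C₁ C₂ u : ℝ) : ℝ :=
  C₂ * Real.sqrt (u * (C₁ - u)) / (Real.pi * (C₂ ^ 2 + u * (C₁ - u)))

open Real Filter Set Topology MeasureTheory intervalIntegral

theorem intervalIntegrable_deriv_of_nonneg_of_tendsto {f f' : ℝ → ℝ} {a b fa fb : ℝ}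
    (hab : a < b) (hderiv : ∀ x ∈ Ioo a b, HasDerivAt f (f' x) x)
    (hpos : ∀ x ∈ Ioo a b, 0 ≤ f' x)
    (ha : Tendsto f (𝓝[>] a) (𝓝 fa)) (hb : Tendsto f (𝓝[<] b) (𝓝 fb)) :
    IntervalIntegrable f' volume a b := by
  set F : ℝ → ℝ := Function.update (Function.update f a fa) b fb
  have hFderiv : ∀ x ∈ Ioo a b, HasDerivAt F (f' x) x := by
    refine fun x hx => (hderiv x hx).congr_of_eventuallyEq ?_
    filter_upwards [Ioo_mem_nhds hx.1 hx.2] with _ hy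
    simp only [F]
    rw [Function.update_of_ne hy.2.ne, Function.update_of_ne hy.1.ne']
  have hFcont : ContinuousOn F (Icc a b) := by
    rw [continuousOn_update_iff, continuousOn_update_iff, Icc_sdiff_right, Ico_sdiff_left]
    refine ⟨⟨fun z hz => (hderiv z hz).continuousAt.continuousWithinAt, ?_⟩, ?_⟩
    · exact fun _ => ha.mono_left (nhdsWithin_mono _ Ioo_subset_Ioi_self)
    · rintro -
      refine (hb.congr' ?_).mono_left (nhdsWithin_mono _ Ico_subset_Iio_self)
      filter_upwards [Ioo_mem_nhdsLT hab] with _ hz using (Function.update_of_ne hz.1.ne' _ _).symm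
  exact (intervalIntegrable_iff_integrableOn_Ioc_of_le hab.le).2
    (integrableOn_deriv_of_nonneg hFcont hFderiv hpos)

noncomputable def arctanDiff (a b t : ℝ) : ℝ :=
  a * arctan (t / a) - b * arctan (t / b)

theorem hasDerivAt_arctanDiff {a b : ℝ} (ha : a ≠ 0) (hb : b ≠ 0) (t : ℝ) :
    HasDerivAt (arctanDiff a b)
      ((a ^ 2 - b ^ 2) * t ^ 2 / ((t ^ 2 + a ^ 2) * (t ^ 2 + b ^ 2))) t := by
  have hderiv (c : ℝ) (hc : c ≠ 0) :
      HasDerivAt (fun t => c * arctan (t / c)) (c ^ 2 / (t ^ 2 + c ^ 2)) t := by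
    refine (((hasDerivAt_id' t).div_const c).arctan.const_mul c).congr_deriv ?_
    field_simp
    ring
  refine ((hderiv a ha).sub (hderiv b hb)).congr_deriv ?_
  field_simp
  ring

theorem tendsto_arctanDiff_atTop {a b : ℝ} (ha : 0 < a) (hb : 0 < b) :
    Tendsto (arctanDiff a b) atTop (𝓝 ((a - b) * (π / 2))) := by
  have harctan (c : ℝ) (hc : 0 < c) : Tendsto (fun t => c * arctan (t / c)) atTop (𝓝 (c * (π / 2))) :=
    ((tendsto_nhds_of_tendsto_nhdsWithin tendsto_arctan_atTop).comp
      (tendsto_id.atTop_div_const hc)).const_mul c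
  rw [sub_mul]
  exact (harctan a ha).sub (harctan b hb)

theorem sqrt_mul_sub_eq_mul_sqrt_sub_div {x : ℝ} (hx : 0 < x) (c : ℝ) :
    √(x * (c - x)) = x * √((c - x) / x) := by
  rw [show x * (c - x) = x ^ 2 * ((c - x) / x) by field_simp, sqrt_mul (sq_nonneg x),
    sqrt_sq hx.le]

theorem hasDerivAt_sqrt_sub_div {c x : ℝ} (hx : x ∈ Ioo 0 c) :
    HasDerivAt (fun u => √((c - u) / u)) (-c / x ^ 2 / (2 * √((c - x) / x))) x := by
  have hquot : HasDerivAt (fun u => (c - u) / u) (-c / x ^ 2) x := by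
    refine (((hasDerivAt_id' x).const_sub c).div (hasDerivAt_id' x) hx.1.ne').congr_deriv ?_
    ring
  exact hquot.sqrt (div_pos (sub_pos.2 hx.2) hx.1).ne'

theorem tendsto_sqrt_sub_div_nhdsGT_zero {c : ℝ} (hc : 0 < c) :
    Tendsto (fun u => √((c - u) / u)) (𝓝[>] 0) atTop := by
  have hquot : Tendsto (fun u => (c - u) / u) (𝓝[>] 0) atTop := by
    refine (tendsto_atTop_add_const_right _ (-1)
      (tendsto_inv_nhdsGT_zero.const_mul_atTop hc)).congr' ?_
    filter_upwards [self_mem_nhdsWithin] with u (hu : 0 < u)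
    field_simp
    ring
  exact tendsto_sqrt_atTop.comp hquot

theorem psi_div_self_eq {C₁ C₂ x : ℝ} (hx : x ∈ Ioo 0 C₁) :
    psi C₁ C₂ x / x =
      C₂ * √((C₁ - x) / x) / (π * (C₂ ^ 2 + x ^ 2 * √((C₁ - x) / x) ^ 2)) := by
  have hsq : x * (C₁ - x) = x ^ 2 * √((C₁ - x) / x) ^ 2 := by
    rw [sq_sqrt (div_pos (sub_pos.2 hx.2) hx.1).le]
    field_simp
  rw [psi, sqrt_mul_sub_eq_mul_sqrt_sub_div hx.1, hsq]
  field_simp [hx.1.ne']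

theorem psi_div_self_nonneg {C₁ C₂ x : ℝ} (hC₂ : 0 ≤ C₂) (hx : x ∈ Ioo 0 C₁) :
    0 ≤ psi C₁ C₂ x / x := by
  rw [psi_div_self_eq hx]
  positivity

/-- A primitive of `psi C₁ C₂ u / u` on `(0, C₁)` when `a` and `-b` are the roots of
`C₂ z² - C₁ z - C₂`; in the variable `t = √((C₁ - u) / u)` the integrand becomes rational in `t²`. -/
noncomputable def psiPrimitive (a b C₁ u : ℝ) : ℝ :=
  -(2 / (π * (a + b))) * arctanDiff a b √((C₁ - u) / u)

section
variable {a b C₁ C₂ : ℝ}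

theorem hasDerivAt_psiPrimitive (hab : a * b = 1) (hC : C₂ * (a - b) = C₁) {x : ℝ}
    (hx : x ∈ Ioo 0 C₁) : HasDerivAt (psiPrimitive a b C₁) (psi C₁ C₂ x / x) x := by
  refine (((hasDerivAt_arctanDiff (left_ne_zero_of_mul_eq_one hab)
    (right_ne_zero_of_mul_eq_one hab) _).comp x
    (hasDerivAt_sqrt_sub_div hx)).const_mul _).congr_deriv ?_
  rw [psi_div_self_eq hx]
  have hx0 : 0 < x := hx.1
  have hq : 0 < (C₁ - x) / x := div_pos (sub_pos.2 hx.2) hx0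
  set t := √((C₁ - x) / x)
  have ht : x * (1 + t ^ 2) = C₁ := by
    rw [sq_sqrt hq.le]
    field_simp
    ring
  have ht0 : 0 < t := sqrt_pos.2 hq
  have hsum : a + b ≠ 0 := fun h => by
    rw [show b = -a by linarith] at hab
    nlinarith [sq_nonneg a]
  subst hC
  field_simp
  linear_combination (a + b) * C₂ *
    (-(C₂ * (a - b) + x * (1 + t ^ 2)) * ht - x ^ 2 * (1 + a * b + 2 * t ^ 2) * hab)

theorem tendsto_psiPrimitive_nhdsGT_zero (ha : 0 < a) (hb : 0 < b) (hC₁ : 0 < C₁) :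
    Tendsto (psiPrimitive a b C₁) (𝓝[>] 0) (𝓝 (-((a - b) / (a + b)))) := by
  have hlim : -((a - b) / (a + b)) = -(2 / (π * (a + b))) * ((a - b) * (π / 2)) := by
    field_simp
  rw [hlim]
  exact ((tendsto_arctanDiff_atTop ha hb).comp
    (tendsto_sqrt_sub_div_nhdsGT_zero hC₁)).const_mul _

theorem tendsto_psiPrimitive_nhdsLT (hC₁ : 0 < C₁) :
    Tendsto (psiPrimitive a b C₁) (𝓝[<] C₁) (𝓝 0) := by
  have hcont : ContinuousAt (psiPrimitive a b C₁) C₁ := by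
    unfold psiPrimitive arctanDiff
    fun_prop (disch := positivity)
  simpa [psiPrimitive, arctanDiff] using hcont.tendsto.mono_left nhdsWithin_le_nhds

theorem integral_psi_div_self (ha : 0 < a) (hb : 0 < b) (hab : a * b = 1)
    (hC : C₂ * (a - b) = C₁) (hC₁ : 0 < C₁) (hC₂ : 0 ≤ C₂) :
    ∫ u in (0 : ℝ)..C₁, psi C₁ C₂ u / u = (a - b) / (a + b) := by
  have hderiv (x : ℝ) (hx : x ∈ Ioo 0 C₁) := hasDerivAt_psiPrimitive hab hC hx
  have h0 := tendsto_psiPrimitive_nhdsGT_zero ha hb hC₁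
  have h1 := tendsto_psiPrimitive_nhdsLT (a := a) (b := b) hC₁
  rw [integral_eq_sub_of_hasDerivAt_of_tendsto hC₁ hderiv
    (intervalIntegrable_deriv_of_nonneg_of_tendsto hC₁ hderiv
      (fun x hx => psi_div_self_nonneg hC₂ hx) h0 h1) h0 h1]
  ring

end

theorem stmt2 (C₁ C₂ : ℝ) (hC₁ : 0 < C₁) (hC₂ : 0 < C₂) :
    ∫ u in (0:ℝ)..C₁, psi C₁ C₂ u / u = C₁ / Real.sqrt (C₁ ^ 2 + 4 * C₂ ^ 2) := by
  set S := √(C₁ ^ 2 + 4 * C₂ ^ 2)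
  have hS2 : S ^ 2 = C₁ ^ 2 + 4 * C₂ ^ 2 := sq_sqrt (by positivity)
  have hCS : C₁ < S := by nlinarith [sqrt_nonneg (C₁ ^ 2 + 4 * C₂ ^ 2)]
  rw [integral_psi_div_self (a := (S + C₁) / (2 * C₂)) (b := (S - C₁) / (2 * C₂))
    (by positivity) (div_pos (by linarith) (by positivity))
    (by field_simp; linear_combination hS2) (by field_simp; ring) hC₁ hC₂.le]
  field_simp
  ring
end

section
/- Let Θ₁ > 0, α_∞ > 0, let λ be a nonzero finite positive Borel measure on ℝ supported in [0, Θ₁], let a ≥ 0 and let σ be a finite positive Borel measure supported in [0, Θ₁] such that for all real s > 0, α_∞ / ( s · ∫ dλ(Θ)/(1 + sΘ) ) = a/s + ∫ dσ(Θ)/(1 + sΘ). Then the total mass of σ satisfies μ₀(σ) = α_∞ · μ₁(λ) / μ₀(λ)²; equivalently, α_∞ = μ₀(σ) μ₀(λ)² / μ₁(λ) provided μ₁(λ) ≠ 0. -/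
/-!
Write `P`, `Q` for the Stieltjes transforms of `λ`, `σ` and `R(s) = ∫ Θ (1 + sΘ)⁻¹ dλ`. By dominated
convergence `P → μ₀(λ)`, `Q → μ₀(σ)` and `R → μ₁(λ)` as `s → 0⁺`, and `μ₀(λ) - P(s) = s R(s)`.
The representation reads `α_∞ / P(s) = a + s Q(s)`; letting `s → 0⁺` gives `a = α_∞ / μ₀(λ)`,
and then `s Q(s) = α_∞ (μ₀(λ) - P(s)) / (μ₀(λ) P(s)) = s α_∞ R(s) / (μ₀(λ) P(s))`. Dividing by
`s` and letting `s → 0⁺` once more gives `μ₀(σ) = α_∞ μ₁(λ) / μ₀(λ)²`.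
-/

open MeasureTheory Filter Topology Set

section LimitAlgebra

variable {P Q R : ℝ → ℝ} {p₀ q₀ r₀ α a : ℝ}

lemma eventually_div_eq_add_mul (hrep : ∀ᶠ s in 𝓝[>] 0, α / (s * P s) = a / s + Q s) :
    ∀ᶠ s in 𝓝[>] 0, α / P s = a + s * Q s := by
  filter_upwards [hrep, self_mem_nhdsWithin] with s hs (hs₀ : 0 < s)
  calc α / P s = s * (α / (s * P s)) := by field_simp
    _ = a + s * Q s := by rw [hs]; field_simp

lemma eq_div_of_div_eq_add_mul (hp₀ : p₀ ≠ 0) (hP : Tendsto P (𝓝[>] 0) (𝓝 p₀))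
    (hQ : Tendsto Q (𝓝[>] 0) (𝓝 q₀)) (hrep : ∀ᶠ s in 𝓝[>] 0, α / P s = a + s * Q s) :
    a = α / p₀ := by
  have hlim : Tendsto (fun s => a + s * Q s) (𝓝[>] 0) (𝓝 (a + 0 * q₀)) :=
    tendsto_const_nhds.add ((tendsto_nhdsWithin_of_tendsto_nhds tendsto_id).mul hQ)
  rw [zero_mul, add_zero] at hlim
  exact tendsto_nhds_unique (hlim.congr' (hrep.mono fun _ h => h.symm))
    (tendsto_const_nhds.div hP hp₀)

lemma eq_mul_div_sq_of_div_eq_add_mul (hp₀ : p₀ ≠ 0) (hP : Tendsto P (𝓝[>] 0) (𝓝 p₀))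
    (hQ : Tendsto Q (𝓝[>] 0) (𝓝 q₀)) (hR : Tendsto R (𝓝[>] 0) (𝓝 r₀))
    (hPR : ∀ᶠ s in 𝓝[>] 0, p₀ - P s = s * R s)
    (hrep : ∀ᶠ s in 𝓝[>] 0, α / P s = a + s * Q s) :
    q₀ = α * r₀ / p₀ ^ 2 := by
  have ha : a = α / p₀ := eq_div_of_div_eq_add_mul hp₀ hP hQ hrep
  have hQR : ∀ᶠ s in 𝓝[>] 0, Q s = α * R s / (p₀ * P s) := by
    filter_upwards [hrep, hPR, hP.eventually_ne hp₀, self_mem_nhdsWithin]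
      with s hs hsR hPs (hs₀ : 0 < s)
    apply mul_left_cancel₀ hs₀.ne'
    calc s * Q s = α / P s - α / p₀ := by rw [hs, ha]; ring
      _ = α * (p₀ - P s) / (p₀ * P s) := by field_simp
      _ = s * (α * R s / (p₀ * P s)) := by rw [hsR]; ring
  have hlim := (hR.const_mul α).div (hP.const_mul p₀) (mul_ne_zero hp₀ hp₀)
  rw [← sq] at hlim
  exact tendsto_nhds_unique (hQ.congr' hQR) hlim

end LimitAlgebra

section StieltjesTransform

variable {μ : Measure ℝ} {f : ℝ → ℝ} {s : ℝ}

lemma norm_inv_one_add_mul_le_one {Θ : ℝ} (hs : 0 ≤ s) (hΘ : 0 ≤ Θ) :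
    ‖(1 + s * Θ)⁻¹‖ ≤ 1 := by
  rw [norm_inv, Real.norm_of_nonneg (by positivity)]
  exact inv_le_one_of_one_le₀ (le_add_of_nonneg_right (by positivity))

lemma MeasureTheory.Integrable.mul_inv_one_add_mul (hμ : ∀ᵐ Θ ∂μ, 0 ≤ Θ) (hf : Integrable f μ)
    (hs : 0 ≤ s) :
    Integrable (fun Θ => f Θ * (1 + s * Θ)⁻¹) μ :=
  hf.mul_bdd (by fun_prop) (hμ.mono fun _ hΘ => norm_inv_one_add_mul_le_one hs hΘ)

lemma tendsto_integral_mul_inv_one_add_mul (hμ : ∀ᵐ Θ ∂μ, 0 ≤ Θ) (hf : Integrable f μ) :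
    Tendsto (fun s => ∫ Θ, f Θ * (1 + s * Θ)⁻¹ ∂μ) (𝓝[>] 0) (𝓝 (∫ Θ, f Θ ∂μ)) := by
  refine tendsto_integral_filter_of_dominated_convergence (fun Θ => ‖f Θ‖)
    (Eventually.of_forall fun s => by fun_prop) ?_ hf.norm (Eventually.of_forall fun Θ => ?_)
  · filter_upwards [self_mem_nhdsWithin] with s (hs : 0 < s)
    filter_upwards [hμ] with Θ hΘ
    rw [norm_mul]
    exact mul_le_of_le_one_right (norm_nonneg _) (norm_inv_one_add_mul_le_one hs.le hΘ)
  · have hcont : ContinuousAt (fun s : ℝ => f Θ * (1 + s * Θ)⁻¹) 0 :=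
      continuousAt_const.mul ((by fun_prop : Continuous fun s : ℝ => 1 + s * Θ).continuousAt.inv₀
        (by simp))
    simpa using hcont.tendsto.mono_left nhdsWithin_le_nhds

variable [IsFiniteMeasure μ]

lemma tendsto_integral_inv_one_add_mul (hμ : ∀ᵐ Θ ∂μ, 0 ≤ Θ) :
    Tendsto (fun s => ∫ Θ, (1 + s * Θ)⁻¹ ∂μ) (𝓝[>] 0) (𝓝 (μ.real univ)) := by
  simpa using tendsto_integral_mul_inv_one_add_mul hμ (integrable_const (1 : ℝ))

lemma measureReal_univ_sub_integral_inv_one_add_mul (hμ : ∀ᵐ Θ ∂μ, 0 ≤ Θ) (hs : 0 ≤ s) :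
    μ.real univ - ∫ Θ, (1 + s * Θ)⁻¹ ∂μ = s * ∫ Θ, Θ * (1 + s * Θ)⁻¹ ∂μ := by
  have hint : Integrable (fun Θ => (1 + s * Θ)⁻¹) μ := by
    simpa using (integrable_const (1 : ℝ)).mul_inv_one_add_mul hμ hs
  have hmass : μ.real univ = ∫ _, (1 : ℝ) ∂μ := by simp
  rw [hmass, ← integral_const_mul, ← integral_sub (integrable_const _) hint]
  refine integral_congr_ae (hμ.mono fun Θ hΘ => ?_)
  have : 1 + s * Θ ≠ 0 := by positivity
  field_simp
  ring

end StieltjesTransform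

theorem stmt13_general (Θ₁ αinf : ℝ)
    (lam : Measure ℝ) [IsFiniteMeasure lam] (hne : lam ≠ 0)
    (hsupp : lam (Set.Icc 0 Θ₁)ᶜ = 0)
    (a : ℝ)
    (σ : Measure ℝ) [IsFiniteMeasure σ] (hσsupp : σ (Set.Icc 0 Θ₁)ᶜ = 0)
    (hrep : ∀ s : ℝ, 0 < s →
      αinf / (s * ∫ Θ : ℝ, (1 + s * Θ)⁻¹ ∂lam) =
        a / s + ∫ Θ : ℝ, (1 + s * Θ)⁻¹ ∂σ) :
    (σ Set.univ).toReal = αinf * (∫ Θ : ℝ, Θ ∂lam) / (lam Set.univ).toReal ^ 2 ∧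
    ((∫ Θ : ℝ, Θ ∂lam) ≠ 0 →
      αinf = (σ Set.univ).toReal * (lam Set.univ).toReal ^ 2 / (∫ Θ : ℝ, Θ ∂lam)) := by
  have hlam : ∀ᵐ Θ ∂lam, Θ ∈ Icc 0 Θ₁ := mem_ae_iff.2 hsupp
  have hlam₀ : ∀ᵐ Θ ∂lam, 0 ≤ Θ := hlam.mono fun _ hΘ => hΘ.1
  have hσ : ∀ᵐ Θ ∂σ, Θ ∈ Icc 0 Θ₁ := mem_ae_iff.2 hσsupp
  have hσ₀ : ∀ᵐ Θ ∂σ, 0 ≤ Θ := hσ.mono fun _ hΘ => hΘ.1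
  have hmoment : Integrable (fun Θ : ℝ => Θ) lam :=
    .of_bound (by fun_prop) Θ₁ (hlam.mono fun _ hΘ => by
      rw [Real.norm_of_nonneg hΘ.1]; exact hΘ.2)
  have : NeZero lam := ⟨hne⟩
  have hmass : σ.real univ = αinf * (∫ Θ, Θ ∂lam) / lam.real univ ^ 2 :=
    eq_mul_div_sq_of_div_eq_add_mul measureReal_univ_ne_zero
      (tendsto_integral_inv_one_add_mul hlam₀) (tendsto_integral_inv_one_add_mul hσ₀)
      (tendsto_integral_mul_inv_one_add_mul hlam₀ hmoment)
      (eventually_nhdsWithin_of_forall fun s hs =>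
        measureReal_univ_sub_integral_inv_one_add_mul hlam₀ (le_of_lt hs))
      (eventually_div_eq_add_mul (eventually_nhdsWithin_of_forall hrep))
  refine ⟨hmass, fun hmoment₀ => ?_⟩
  have hmass₀ : lam.real univ ≠ 0 := measureReal_univ_ne_zero
  change αinf = σ.real univ * lam.real univ ^ 2 / _
  rw [hmass]
  field_simp

/-- The total mass of the tortuosity representing measure σ satisfies
μ₀(σ) = α_∞ μ₁(λ) / μ₀(λ)²; equivalently α_∞ = μ₀(σ) μ₀(λ)² / μ₁(λ)
when μ₁(λ) ≠ 0. -/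
theorem stmt13 (Θ₁ αinf : ℝ) (hΘ₁ : 0 < Θ₁) (hα : 0 < αinf)
    (lam : Measure ℝ) [IsFiniteMeasure lam] (hne : lam ≠ 0)
    (hsupp : lam (Set.Icc 0 Θ₁)ᶜ = 0)
    (a : ℝ) (ha : 0 ≤ a)
    (σ : Measure ℝ) [IsFiniteMeasure σ] (hσsupp : σ (Set.Icc 0 Θ₁)ᶜ = 0)
    (hrep : ∀ s : ℝ, 0 < s →
      αinf / (s * ∫ Θ : ℝ, (1 + s * Θ)⁻¹ ∂lam) =
        a / s + ∫ Θ : ℝ, (1 + s * Θ)⁻¹ ∂σ) :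
    (σ Set.univ).toReal = αinf * (∫ Θ : ℝ, Θ ∂lam) / (lam Set.univ).toReal ^ 2 ∧
    ((∫ Θ : ℝ, Θ ∂lam) ≠ 0 →
      αinf = (σ Set.univ).toReal * (lam Set.univ).toReal ^ 2 / (∫ Θ : ℝ, Θ ∂lam)) :=
  stmt13_general Θ₁ αinf lam hne hsupp a σ hσsupp hrep
end
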